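/- With the sphere spectral data ν_{N,j} = (1/R²)[j(j+1)+(N/2)(2j+1)], m_{N,j}=N+2j+1, the coefficient of N^0 in the asymptotic expansion of Y_N(φ) = Σ_j m_{N,j} φ(ν_{N,j}/N) equals f_1(φ) = (1/R²) Σ_{j=0}^∞ φ'((2j+1)/(2R²)) j(j+1) + Σ_{j=0}^∞ φ((2j+1)/(2R²))(2j+1). -/

import Mathlib

open Real Set

/-!
Write `x_j = (2j+1)/(2R²)` and `d_j = j(j+1)/(NR²)`, so that the `j`-th summand of `Y_N(φ)` is
`(N + 2j + 1) φ(x_j + d_j)`. Since `N d_j = j(j+1)/R²`, it differs from the `j`-th summand of the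
expansion by `N (φ(x_j + d_j) - φ(x_j) - d_j φ'(x_j)) + (2j+1) (φ(x_j + d_j) - φ(x_j))`, which the
mean value inequality bounds by `N d_j² sup |φ''| + (2j+1) d_j sup |φ'|` over `[x_j, x_j + d_j]`.
As `d_j ≤ (j+1)²/(NR²)` while Schwartz decay makes `φ'` and `φ''` of order `j⁻⁵` and `j⁻⁶` beyond
`x_j`, the difference is `O(N⁻¹ (j+1)⁻²)`, which sums to `O(N⁻¹)`.
-/

/-- Smoothed spectral density for the magnetic Laplacian on the sphere of radius `R`. -/
noncomputable def Ysphere (R : ℝ) (φ : SchwartzMap ℝ ℂ) (N : ℕ) : ℂ :=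
  ∑' j : ℕ, ((N : ℂ) + 2 * (j : ℂ) + 1) *
    φ ((1 / R ^ 2) * ((j : ℝ) * ((j : ℝ) + 1) / N + (2 * (j : ℝ) + 1) / 2))

section MeanValue

variable {E : Type*} [NormedAddCommGroup E] [NormedSpace ℝ E] {f : ℝ → E} {x y M : ℝ}

theorem norm_sub_le_mul_of_norm_deriv_le (hf : Differentiable ℝ f) (hxy : x ≤ y)
    (hM : ∀ z ∈ Icc x y, ‖deriv f z‖ ≤ M) : ‖f y - f x‖ ≤ M * (y - x) :=
  norm_image_sub_le_of_norm_deriv_le_segment' (fun z _ => (hf z).hasDerivAt.hasDerivWithinAt)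
    (fun z hz => hM z (Ico_subset_Icc_self hz)) y ⟨hxy, le_rfl⟩

theorem norm_sub_sub_smul_deriv_le (hf : Differentiable ℝ f) (hf' : Differentiable ℝ (deriv f))
    (hxy : x ≤ y) (hM : ∀ z ∈ Icc x y, ‖deriv (deriv f) z‖ ≤ M) :
    ‖f y - f x - (y - x) • deriv f x‖ ≤ M * (y - x) ^ 2 := by
  have hg : ∀ z ∈ Icc x y, HasDerivWithinAt (fun z => f z - (z - x) • deriv f x)
      (deriv f z - deriv f x) (Icc x y) z := fun z _ =>
    ((hf z).hasDerivAt.sub (((hasDerivAt_id z).sub_const x).smul_const (deriv f x))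
      |>.congr_deriv (by simp)).hasDerivWithinAt
  have hM0 : 0 ≤ M := (norm_nonneg _).trans (hM x ⟨le_rfl, hxy⟩)
  have hbound : ∀ z ∈ Ico x y, ‖deriv f z - deriv f x‖ ≤ M * (y - x) := fun z hz =>
    (norm_sub_le_mul_of_norm_deriv_le hf' hz.1 fun w hw =>
      hM w ⟨hw.1, hw.2.trans hz.2.le⟩).trans (by gcongr; exact hz.2.le)
  have := norm_image_sub_le_of_norm_deriv_le_segment' hg hbound y ⟨hxy, le_rfl⟩
  rwa [sub_self, zero_smul, sub_zero, sub_right_comm, mul_assoc, ← sq] at this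

end MeanValue

theorem SchwartzMap.exists_norm_le_div_one_add_norm_pow {E F : Type*} [NormedAddCommGroup E]
    [NormedSpace ℝ E] [NormedAddCommGroup F] [NormedSpace ℝ F] (f : SchwartzMap E F) (k : ℕ) :
    ∃ C, 0 ≤ C ∧ ∀ x, ‖f x‖ ≤ C / (1 + ‖x‖) ^ k := by
  refine ⟨2 ^ k * (Finset.Iic (k, 0)).sup (fun m => SchwartzMap.seminorm ℝ m.1 m.2) f,
    by positivity, fun x => ?_⟩
  rw [le_div_iff₀ (by positivity), mul_comm]
  simpa [norm_iteratedFDeriv_zero] using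
    SchwartzMap.one_add_le_sup_seminorm_apply (𝕜 := ℝ) (m := (k, 0)) le_rfl le_rfl f x

theorem SchwartzMap.exists_norm_le_div_pow_of_mul_le {F : Type*} [NormedAddCommGroup F]
    [NormedSpace ℝ F] (f : SchwartzMap ℝ F) {α : ℝ} (hα : 0 < α) (k : ℕ) :
    ∃ C, ∀ (j : ℕ) (z : ℝ), α * j ≤ z → ‖f z‖ ≤ C / ((j : ℝ) + 1) ^ k := by
  obtain ⟨C, hC, hf⟩ := f.exists_norm_le_div_one_add_norm_pow k
  set s := min 1 α
  have hs : 0 < s := lt_min one_pos hα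
  refine ⟨C / s ^ k, fun j z hz => (hf z).trans ?_⟩
  have hj : s * ((j : ℝ) + 1) ≤ 1 + ‖z‖ := by
    rw [Real.norm_eq_abs]
    nlinarith [min_le_right 1 α, min_le_left 1 α, le_abs_self z, (j.cast_nonneg : (0 : ℝ) ≤ j)]
  rw [div_div, ← mul_pow]
  gcongr

theorem norm_tsum_sub_tsum_le {E : Type*} [NormedAddCommGroup E] [CompleteSpace E]
    {a b : ℕ → E} {w : ℕ → ℝ} {s : ℝ} (hb : Summable b) (hw : HasSum w s)
    (h : ∀ j, ‖a j - b j‖ ≤ w j) : ‖∑' j, a j - ∑' j, b j‖ ≤ s := by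
  have hab : Summable (fun j => a j - b j) := hw.summable.of_norm_bounded h
  rw [← (by simpa using hab.add hb : Summable a).tsum_sub hb]
  exact tsum_of_norm_bounded hw h

theorem summable_one_div_natCast_add_one_sq :
    Summable fun j : ℕ => 1 / ((j : ℝ) + 1) ^ 2 := by
  simpa using (summable_nat_add_iff 1).2 (Real.summable_one_div_nat_pow.2 one_lt_two)

theorem summable_mul_of_norm_le_div_pow {R : Type*} [NormedRing R] [CompleteSpace R]
    {a c : ℕ → R} {C : ℝ} {k : ℕ} (ha : ∀ j, ‖a j‖ ≤ C / ((j : ℝ) + 1) ^ (k + 2))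
    (hc : ∀ j, ‖c j‖ ≤ ((j : ℝ) + 1) ^ k) : Summable fun j => a j * c j := by
  refine (summable_one_div_natCast_add_one_sq.mul_left C).of_norm_bounded fun j =>
    (norm_mul_le _ _).trans ?_
  have hC : 0 ≤ C / ((j : ℝ) + 1) ^ (k + 2) := (norm_nonneg _).trans (ha j)
  calc ‖a j‖ * ‖c j‖ ≤ C / ((j : ℝ) + 1) ^ (k + 2) * ((j : ℝ) + 1) ^ k :=
        mul_le_mul (ha j) (hc j) (norm_nonneg _) hC
    _ = C * (1 / ((j : ℝ) + 1) ^ 2) := by field_simp; ring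

theorem norm_two_mul_natCast_add_one (j : ℕ) : ‖2 * (j : ℂ) + 1‖ = 2 * j + 1 := by
  exact_mod_cast Complex.norm_natCast (2 * j + 1)

theorem norm_natCast_mul_natCast_add_one (j : ℕ) : ‖(j : ℂ) * ((j : ℂ) + 1)‖ = j * (j + 1) := by
  exact_mod_cast Complex.norm_natCast (j * (j + 1))

theorem one_div_sq_mul_natCast_le (R : ℝ) (j : ℕ) :
    1 / R ^ 2 * j ≤ (2 * (j : ℝ) + 1) / (2 * R ^ 2) := by
  rw [show (2 * (j : ℝ) + 1) / (2 * R ^ 2) = 1 / R ^ 2 * j + 1 / R ^ 2 / 2 by ring]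
  exact le_add_of_nonneg_right (by positivity)

theorem norm_summand_sub_expansion_le {f : ℝ → ℂ} (hf : Differentiable ℝ f)
    (hf' : Differentiable ℝ (deriv f)) (R : ℝ) {N : ℕ} (hN : 1 ≤ N) (j : ℕ) {C₁ C₂ : ℝ}
    (h₁ : ∀ z, 1 / R ^ 2 * j ≤ z → ‖deriv f z‖ ≤ C₁ / ((j : ℝ) + 1) ^ 5)
    (h₂ : ∀ z, 1 / R ^ 2 * j ≤ z → ‖deriv (deriv f) z‖ ≤ C₂ / ((j : ℝ) + 1) ^ 6) :
    ‖((N : ℂ) + 2 * (j : ℂ) + 1) *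
        f ((1 / R ^ 2) * ((j : ℝ) * ((j : ℝ) + 1) / N + (2 * (j : ℝ) + 1) / 2)) -
      (f ((2 * (j : ℝ) + 1) / (2 * R ^ 2)) * N +
        ((1 / (R : ℂ) ^ 2) *
            (deriv f ((2 * (j : ℝ) + 1) / (2 * R ^ 2)) * ((j : ℂ) * ((j : ℂ) + 1))) +
          f ((2 * (j : ℝ) + 1) / (2 * R ^ 2)) * (2 * (j : ℂ) + 1)))‖ ≤
      ((1 / R ^ 2) ^ 2 * C₂ + 2 * (1 / R ^ 2) * C₁) / N * (1 / ((j : ℝ) + 1) ^ 2) := by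
  set α : ℝ := 1 / R ^ 2
  set x : ℝ := (2 * (j : ℝ) + 1) / (2 * R ^ 2)
  set d : ℝ := α * ((j : ℝ) * ((j : ℝ) + 1) / N)
  set u : ℝ := (j : ℝ) + 1
  have hα : 0 ≤ α := by positivity
  have hN0 : (0 : ℝ) < N := by exact_mod_cast hN
  have hd : 0 ≤ d := by positivity
  have hx : α * j ≤ x := one_div_sq_mul_natCast_le R j
  have harg : α * ((j : ℝ) * ((j : ℝ) + 1) / N + (2 * (j : ℝ) + 1) / 2) = x + d := by
    simp only [α, x, d]; ring
  have hNd : (N : ℂ) * (d : ℂ) = 1 / (R : ℂ) ^ 2 * ((j : ℂ) * ((j : ℂ) + 1)) := by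
    have : (N : ℂ) ≠ 0 := by exact_mod_cast hN0.ne'
    simp only [d, α]; push_cast; field_simp
  have hlow : ∀ z ∈ Icc x (x + d), α * j ≤ z := fun z hz => hx.trans hz.1
  have e₁ := norm_sub_le_mul_of_norm_deriv_le hf (le_add_of_nonneg_right hd)
    fun z hz => h₁ z (hlow z hz)
  have e₂ := norm_sub_sub_smul_deriv_le hf hf' (le_add_of_nonneg_right hd)
    fun z hz => h₂ z (hlow z hz)
  rw [add_sub_cancel_left] at e₁ e₂
  rw [Complex.real_smul] at e₂
  have hC₁ : 0 ≤ C₁ / u ^ 5 := (norm_nonneg _).trans (h₁ x hx)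
  have hC₂ : 0 ≤ C₂ / u ^ 6 := (norm_nonneg _).trans (h₂ x hx)
  have hdu : d ≤ α * (u ^ 2 / N) := by
    simp only [d, u]; gcongr; nlinarith
  have hju : 2 * (j : ℝ) + 1 ≤ 2 * u := by simp only [u]; linarith
  rw [harg]
  calc _ = ‖(N : ℂ) * (f (x + d) - f x - (d : ℂ) * deriv f x) +
          (2 * (j : ℂ) + 1) * (f (x + d) - f x)‖ := by
        congr 1; linear_combination (deriv f x) * hNd
    _ ≤ N * (C₂ / u ^ 6 * d ^ 2) + (2 * j + 1) * (C₁ / u ^ 5 * d) := by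
        refine (norm_add_le _ _).trans ?_
        rw [norm_mul, norm_mul, Complex.norm_natCast, norm_two_mul_natCast_add_one]
        gcongr
    _ ≤ N * (C₂ / u ^ 6 * (α * (u ^ 2 / N)) ^ 2) +
          2 * u * (C₁ / u ^ 5 * (α * (u ^ 2 / N))) := by
        gcongr
    _ = (α ^ 2 * C₂ + 2 * α * C₁) / N * (1 / u ^ 2) := by field_simp

/-- `Y_N(φ) = f_0(φ)N + f_1(φ) + O(N^{-1})` with
`f_1(φ) = (1/R²) Σ_j φ'((2j+1)/(2R²)) j(j+1) + Σ_j φ((2j+1)/(2R²))(2j+1)`. -/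
theorem stmt9 (R : ℝ) (hR : 0 < R) (φ : SchwartzMap ℝ ℂ) :
    ∃ C : ℝ, ∀ N : ℕ, 1 ≤ N →
      ‖Ysphere R φ N -
          ((∑' j : ℕ, φ ((2 * (j : ℝ) + 1) / (2 * R ^ 2))) * (N : ℂ) +
            ((1 / (R : ℂ) ^ 2) *
                ∑' j : ℕ, deriv (fun x : ℝ => φ x) ((2 * (j : ℝ) + 1) / (2 * R ^ 2)) *
                  ((j : ℂ) * ((j : ℂ) + 1)) +
              ∑' j : ℕ, φ ((2 * (j : ℝ) + 1) / (2 * R ^ 2)) * (2 * (j : ℂ) + 1)))‖ ≤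
        C / N := by
  have hα : 0 < 1 / R ^ 2 := by positivity
  have hx := one_div_sq_mul_natCast_le R
  set φ' := SchwartzMap.derivCLM ℝ ℂ φ
  obtain ⟨C₀, h₀⟩ := φ.exists_norm_le_div_pow_of_mul_le hα 4
  obtain ⟨C₁, h₁⟩ := φ'.exists_norm_le_div_pow_of_mul_le hα 5
  obtain ⟨C₂, h₂⟩ := (SchwartzMap.derivCLM ℝ ℂ φ').exists_norm_le_div_pow_of_mul_le hα 6
  have hA : Summable fun j : ℕ => φ ((2 * (j : ℝ) + 1) / (2 * R ^ 2)) := by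
    simpa using summable_mul_of_norm_le_div_pow (k := 2) (c := fun _ => 1)
      (fun j => h₀ j _ (hx j)) fun j => by rw [norm_one]; nlinarith [(j.cast_nonneg : (0 : ℝ) ≤ j)]
  have hB : Summable fun j : ℕ => deriv (fun x : ℝ => φ x) ((2 * (j : ℝ) + 1) / (2 * R ^ 2)) *
      ((j : ℂ) * ((j : ℂ) + 1)) :=
    summable_mul_of_norm_le_div_pow (k := 3) (fun j => h₁ j _ (hx j)) fun j => by
      rw [norm_natCast_mul_natCast_add_one]
      nlinarith [(j.cast_nonneg : (0 : ℝ) ≤ j), sq_nonneg ((j : ℝ) + 1)]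
  have hD : Summable fun j : ℕ => φ ((2 * (j : ℝ) + 1) / (2 * R ^ 2)) * (2 * (j : ℂ) + 1) :=
    summable_mul_of_norm_le_div_pow (k := 2) (fun j => h₀ j _ (hx j)) fun j => by
      rw [norm_two_mul_natCast_add_one]; nlinarith [(j.cast_nonneg : (0 : ℝ) ≤ j)]
  set K := (1 / R ^ 2) ^ 2 * C₂ + 2 * (1 / R ^ 2) * C₁
  refine ⟨K * ∑' j : ℕ, 1 / ((j : ℝ) + 1) ^ 2, fun N hN => ?_⟩
  rw [Ysphere, ← tsum_mul_right, ← tsum_mul_left, ← (hB.mul_left _).tsum_add hD,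
    ← (hA.mul_right _).tsum_add ((hB.mul_left _).add hD)]
  refine (norm_tsum_sub_tsum_le ((hA.mul_right _).add ((hB.mul_left _).add hD))
    (summable_one_div_natCast_add_one_sq.hasSum.mul_left (K / N)) fun j => ?_).trans_eq
    (by ring)
  exact norm_summand_sub_expansion_le φ.differentiable φ'.differentiable R hN j (h₁ j) (h₂ j)
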